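/- arXiv:1901.00651 — 2 statements merged into one kernel-verified Lean document; each statement's English description precedes it below -/
import Mathlib

section
/- A weakly additive, order-preserving functional $f\colon L \to \mathbb{R}$ on a partially ordered vector space $L$ with interior point $x_0$ of the positive cone is bounded (i.e., $\sup\{|f(x)| : x \in \langle 0;1\rangle\} < \infty$) if and only if it is continuous with respect to the topology generated by the neighbourhoods $\langle z;\delta\rangle$. -/
/-!
Weak additivity and monotonicity alone confine `f` on `⟨z;δ⟩` to within `δ f(x₀)` of `f z`:
`⟨z;δ⟩` lies in the order interval `[z - δx₀, z + δx₀]`, and `f (z ± δx₀) = f z ± δ f(x₀)`.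
Taking `z = 0` (where `f 0 = 0`) gives boundedness, and since `⟨z;δ⟩` is an open neighbourhood
of `z` it gives continuity, so both sides of the equivalence always hold.
-/

def InnerSeg {L : Type*} [AddCommGroup L] [Module ℝ L] (a b x : L) : Prop :=
  x ∈ segment ℝ a b ∧ x ≠ a ∧ x ≠ b

def InnerPoint {L : Type*} [AddCommGroup L] [Module ℝ L] (S : Set L) (x : L) : Prop :=
  x ∈ S ∧ ∀ a b : L, InnerSeg a b x →
    ∃ c d : L, c ∈ segment ℝ a b ∩ S ∧ d ∈ segment ℝ a b ∩ S ∧ InnerSeg c d x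

def coneNbhd {L : Type*} [AddCommGroup L] [PartialOrder L] [Module ℝ L]
    (x₀ z : L) (δ : ℝ) : Set L :=
  {y : L | InnerPoint {v : L | 0 ≤ v} (δ • x₀ + (y - z)) ∧
           InnerPoint {v : L | 0 ≤ v} (δ • x₀ - (y - z))}

def coneTop {L : Type*} [AddCommGroup L] [PartialOrder L] [Module ℝ L]
    (x₀ : L) : TopologicalSpace L :=
  TopologicalSpace.generateFrom {s : Set L | ∃ z : L, ∃ δ : ℝ, 0 < δ ∧ s = coneNbhd x₀ z δ}

def WeaklyAdditive {L : Type*} [AddCommGroup L] [Module ℝ L] (x₀ : L) (f : L → ℝ) : Prop :=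
  ∀ x : L, ∀ l : ℝ, f (x + l • x₀) = f x + l * f x₀

section InnerPoint

variable {L : Type*} [AddCommGroup L] [Module ℝ L]

lemma smul_mem_segment_smul {a b x : L} (δ : ℝ) (h : x ∈ segment ℝ a b) :
    δ • x ∈ segment ℝ (δ • a) (δ • b) := by
  obtain ⟨u, v, hu, hv, huv, rfl⟩ := h
  exact ⟨u, v, hu, hv, huv, by module⟩

lemma InnerSeg.smul {a b x : L} {δ : ℝ} (hδ : δ ≠ 0) (h : InnerSeg a b x) :
    InnerSeg (δ • a) (δ • b) (δ • x) :=
  ⟨smul_mem_segment_smul δ h.1, (smul_right_injective L hδ).ne h.2.1,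
    (smul_right_injective L hδ).ne h.2.2⟩

lemma InnerPoint.smul {S : Set L} {x : L} {δ : ℝ} (hδ : δ ≠ 0) (hS : ∀ v ∈ S, δ • v ∈ S)
    (h : InnerPoint S x) : InnerPoint S (δ • x) := by
  refine ⟨hS x h.1, fun a b hab => ?_⟩
  have hab' : InnerSeg (δ⁻¹ • a) (δ⁻¹ • b) x := by
    simpa only [inv_smul_smul₀ hδ] using hab.smul (inv_ne_zero hδ)
  obtain ⟨c, d, ⟨hc, hcS⟩, ⟨hd, hdS⟩, hcd⟩ := h.2 _ _ hab'
  have unscale {y : L} (hy : y ∈ segment ℝ (δ⁻¹ • a) (δ⁻¹ • b)) : δ • y ∈ segment ℝ a b := by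
    simpa only [smul_inv_smul₀ hδ] using smul_mem_segment_smul δ hy
  exact ⟨δ • c, δ • d, ⟨unscale hc, hS c hcS⟩, ⟨unscale hd, hS d hdS⟩, hcd.smul hδ⟩

end InnerPoint

section ConeNbhd

variable {L : Type*} [AddCommGroup L] [PartialOrder L] [Module ℝ L] {x₀ : L}

lemma InnerPoint.smul_of_pos [PosSMulMono ℝ L] {x : L} {δ : ℝ} (hδ : 0 < δ)
    (h : InnerPoint {v : L | 0 ≤ v} x) : InnerPoint {v : L | 0 ≤ v} (δ • x) :=
  h.smul hδ.ne' fun _ hv => smul_nonneg hδ.le hv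

lemma self_mem_coneNbhd [PosSMulMono ℝ L] (hx₀ : InnerPoint {v : L | 0 ≤ v} x₀) (z : L)
    {δ : ℝ} (hδ : 0 < δ) : z ∈ coneNbhd x₀ z δ := by
  have h := hx₀.smul_of_pos hδ
  simp only [coneNbhd, Set.mem_ofPred_eq, sub_self, add_zero, sub_zero]
  exact ⟨h, h⟩

open Topology in
lemma isOpen_coneNbhd (z : L) {δ : ℝ} (hδ : 0 < δ) :
    IsOpen[coneTop x₀] (coneNbhd x₀ z δ) :=
  TopologicalSpace.GenerateOpen.basic _ ⟨z, δ, hδ, rfl⟩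

lemma mem_Icc_of_mem_coneNbhd [IsOrderedAddMonoid L] {y z : L} {δ : ℝ}
    (hy : y ∈ coneNbhd x₀ z δ) :
    y ∈ Set.Icc (z - δ • x₀) (z + δ • x₀) := by
  have hlow : (0 : L) ≤ δ • x₀ + (y - z) := hy.1.1
  have hupp : (0 : L) ≤ δ • x₀ - (y - z) := hy.2.1
  constructor
  · rwa [← sub_nonneg, show y - (z - δ • x₀) = δ • x₀ + (y - z) by abel]
  · rwa [← sub_nonneg, show z + δ • x₀ - y = δ • x₀ - (y - z) by abel]

end ConeNbhd

section WeaklyAdditive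

variable {L : Type*} [AddCommGroup L] [Module ℝ L] {x₀ : L} {f : L → ℝ}

lemma WeaklyAdditive.map_zero (hwa : WeaklyAdditive x₀ f) : f 0 = 0 := by
  simpa using hwa 0 1

lemma WeaklyAdditive.map_sub_smul (hwa : WeaklyAdditive x₀ f) (x : L) (l : ℝ) :
    f (x - l • x₀) = f x - l * f x₀ := by
  rw [sub_eq_add_neg, ← neg_smul, hwa, neg_mul, ← sub_eq_add_neg]

variable [PartialOrder L] [IsOrderedAddMonoid L]

lemma WeaklyAdditive.abs_sub_le_of_mem_coneNbhd (hwa : WeaklyAdditive x₀ f) (hmono : Monotone f)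
    {y z : L} {δ : ℝ} (hy : y ∈ coneNbhd x₀ z δ) : |f y - f z| ≤ δ * f x₀ := by
  obtain ⟨hlow, hupp⟩ := mem_Icc_of_mem_coneNbhd hy
  have hflow := hmono hlow
  have hfupp := hmono hupp
  rw [hwa.map_sub_smul] at hflow
  rw [hwa] at hfupp
  rw [abs_le]
  constructor <;> linarith

lemma WeaklyAdditive.abs_le_of_mem_coneNbhd_zero (hwa : WeaklyAdditive x₀ f)
    (hmono : Monotone f) {x : L} (hx : x ∈ coneNbhd x₀ 0 1) : |f x| ≤ f x₀ := by
  simpa [hwa.map_zero] using hwa.abs_sub_le_of_mem_coneNbhd hmono hx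

lemma WeaklyAdditive.continuous [PosSMulMono ℝ L] (hx₀ : InnerPoint {v : L | 0 ≤ v} x₀)
    (hwa : WeaklyAdditive x₀ f) (hmono : Monotone f) : @Continuous L ℝ (coneTop x₀) _ f := by
  let _ : TopologicalSpace L := coneTop x₀
  have hfx₀ : 0 ≤ f x₀ := hwa.map_zero ▸ hmono hx₀.1
  rw [Metric.continuous_iff']
  intro z ε hε
  set δ := ε / (f x₀ + 1)
  have hδ : 0 < δ := by positivity
  have hδε : δ * f x₀ < ε := by
    rw [div_mul_eq_mul_div, div_lt_iff₀ (by positivity)]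
    nlinarith
  filter_upwards [(isOpen_coneNbhd z hδ).mem_nhds (self_mem_coneNbhd hx₀ z hδ)] with y hy
  rw [Real.dist_eq]
  exact (hwa.abs_sub_le_of_mem_coneNbhd hmono hy).trans_lt hδε

end WeaklyAdditive

theorem stmt7_general {L : Type*} [AddCommGroup L] [PartialOrder L] [IsOrderedAddMonoid L] [Module ℝ L]
    [PosSMulStrictMono ℝ L]
    (x₀ : L) (hx₀ : InnerPoint {v : L | 0 ≤ v} x₀)
    (f : L → ℝ) (hwa : WeaklyAdditive x₀ f) (hmono : Monotone f) :
    (∃ M : ℝ, ∀ x ∈ coneNbhd x₀ 0 1, |f x| ≤ M) ↔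
      @Continuous L ℝ (coneTop x₀) _ f :=
  ⟨fun _ => hwa.continuous hx₀ hmono,
    fun _ => ⟨f x₀, fun _ hx => hwa.abs_le_of_mem_coneNbhd_zero hmono hx⟩⟩

theorem stmt7 {L : Type*} [AddCommGroup L] [PartialOrder L] [IsOrderedAddMonoid L] [Module ℝ L]
    [PosSMulStrictMono ℝ L] [PosSMulReflectLT ℝ L]
    (x₀ : L) (hx₀ : InnerPoint {v : L | 0 ≤ v} x₀)
    (f : L → ℝ) (hwa : WeaklyAdditive x₀ f) (hmono : Monotone f) :
    (∃ M : ℝ, ∀ x ∈ coneNbhd x₀ 0 1, |f x| ≤ M) ↔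
      @Continuous L ℝ (coneTop x₀) _ f :=
  stmt7_general x₀ hx₀ f hwa hmono
end

section
/- Let $E, F$ be vector spaces with order units, $\mathcal{H}$ an equicontinuous family of weakly additive, order-preserving operators $T\colon E \to F$, and $A$ a bounded subset of $E$. Then there exists a bounded subset $B \subseteq F$ with $T(A) \subseteq B$ for all $T \in \mathcal{H}$ (i.e., $\bigcup_{T \in \mathcal{H}} T(A)$ is bounded in $F$). -/
/-- The order norm `‖x‖ = inf {c > 0 : -c•e ≤ x ≤ c•e}` of a space with order unit `e`. -/
noncomputable def ordNorm {L : Type*} [AddCommGroup L] [PartialOrder L] [Module ℝ L]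
    (e x : L) : ℝ :=
  sInf {c : ℝ | 0 < c ∧ -(c • e) ≤ x ∧ x ≤ c • e}

/-- `e` is an order unit: every element is bounded by a multiple of `e`. -/
def IsOrderUnit {L : Type*} [AddCommGroup L] [PartialOrder L] [Module ℝ L] (e : L) : Prop :=
  ∀ x : L, ∃ l : ℝ, 0 < l ∧ -(l • e) ≤ x ∧ x ≤ l • e

/-- The space is Archimedean with respect to the order unit `e`. -/
def IsArch {L : Type*} [AddCommGroup L] [PartialOrder L] [Module ℝ L] (e : L) : Prop :=
  ∀ x : L, (∀ n : ℕ, 0 < n → (n : ℝ) • x ≤ e) → x ≤ 0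

/-- An operator `T` is weakly additive with respect to the order unit `e`. -/
def WAddOp {L M : Type*} [AddCommGroup L] [Module ℝ L] [AddCommGroup M] [Module ℝ M]
    (e : L) (T : L → M) : Prop :=
  ∀ x : L, ∀ l : ℝ, T (x + l • e) = T x + l • T e

/-!
Weak additivity at `x = 0`, `l = 1` forces `T 0 = 0`, hence `T (t • e) = t • T e`, and monotonicity
turns `-(c • e) ≤ x ≤ c • e` into `-(c • T e) ≤ T x ≤ c • T e`. So every `T` is controlled by the
single vector `T e`, and equicontinuity at `ε = 1` bounds `(δ / 2) • T e` by the order unit of `F`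
uniformly in `T`.
-/

section OrderNorm

variable {L : Type*} [AddCommGroup L] [PartialOrder L] [Module ℝ L] {e x : L}

lemma ordNorm_le_of_neg_smul_le_of_le_smul {c : ℝ} (hc : 0 < c) (h₁ : -(c • e) ≤ x)
    (h₂ : x ≤ c • e) : ordNorm e x ≤ c :=
  csInf_le ⟨0, fun _ hy => hy.1.le⟩ ⟨hc, h₁, h₂⟩

variable [PosSMulMono ℝ L]

lemma IsOrderUnit.nonneg (hu : IsOrderUnit e) : 0 ≤ e := by
  obtain ⟨l, hl, -, h⟩ := hu 0
  calc (0 : L) = l⁻¹ • (0 : L) := (smul_zero _).symm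
    _ ≤ l⁻¹ • l • e := smul_le_smul_of_nonneg_left h (inv_pos.2 hl).le
    _ = e := inv_smul_smul₀ hl.ne' e

variable [IsOrderedAddMonoid L]

lemma ordNorm_smul_self_le (he : 0 ≤ e) {t : ℝ} (ht : 0 < t) : ordNorm e (t • e) ≤ t :=
  ordNorm_le_of_neg_smul_le_of_le_smul ht (neg_le_self (smul_nonneg ht.le he)) le_rfl

lemma IsOrderUnit.neg_smul_le_and_le_smul_of_ordNorm_lt
    (hu : IsOrderUnit e) {r : ℝ} (h : ordNorm e x < r) : -(r • e) ≤ x ∧ x ≤ r • e := by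
  obtain ⟨c, ⟨-, hc₁, hc₂⟩, hcr⟩ := exists_lt_of_csInf_lt (hu x) h
  have hce : c • e ≤ r • e := smul_le_smul_of_nonneg_right hcr.le hu.nonneg
  exact ⟨(neg_le_neg hce).trans hc₁, hc₂.trans hce⟩

end OrderNorm

namespace WAddOp

variable {L M : Type*} [AddCommGroup L] [Module ℝ L] [AddCommGroup M] [Module ℝ M]
  {e : L} {T : L → M}

lemma map_zero (hT : WAddOp e T) : T 0 = 0 := by
  simpa using hT 0 1

lemma map_smul_self (hT : WAddOp e T) (t : ℝ) : T (t • e) = t • T e := by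
  simpa [hT.map_zero] using hT 0 t

lemma neg_smul_le_map_and_map_le_smul [PartialOrder L] [PartialOrder M] (hT : WAddOp e T)
    (hmono : Monotone T) {c : ℝ} {x : L} (h₁ : -(c • e) ≤ x) (h₂ : x ≤ c • e) :
    -(c • T e) ≤ T x ∧ T x ≤ c • T e := by
  have hneg := hmono h₁
  rw [← neg_smul, hT.map_smul_self, neg_smul] at hneg
  exact ⟨hneg, hT.map_smul_self c ▸ hmono h₂⟩

lemma map_self_le_inv_smul [PartialOrder M] [IsOrderedAddMonoid M] [PosSMulMono ℝ M] {f : M}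
    (hT : WAddOp e T) (hf : IsOrderUnit f) {t : ℝ} (ht : 0 < t) (h : ordNorm f (T (t • e)) < 1) :
    T e ≤ t⁻¹ • f := by
  have hle := (hf.neg_smul_le_and_le_smul_of_ordNorm_lt h).2
  rw [hT.map_smul_self, one_smul] at hle
  calc T e = t⁻¹ • t • T e := (inv_smul_smul₀ ht.ne' _).symm
    _ ≤ t⁻¹ • f := smul_le_smul_of_nonneg_left hle (inv_pos.2 ht).le

end WAddOp

theorem stmt12_general {E F : Type*}
    [AddCommGroup E] [PartialOrder E] [IsOrderedAddMonoid E] [Module ℝ E]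
    [PosSMulStrictMono ℝ E]
    [AddCommGroup F] [PartialOrder F] [IsOrderedAddMonoid F] [Module ℝ F]
    [PosSMulStrictMono ℝ F]
    (eE : E) (eF : F) (huE : IsOrderUnit eE)
    (huF : IsOrderUnit eF)
    (H : Set (E → F)) (hH : ∀ T ∈ H, WAddOp eE T ∧ Monotone T)
    (hequi : ∀ ε : ℝ, 0 < ε → ∃ δ : ℝ, 0 < δ ∧
      ∀ T ∈ H, ∀ x : E, ordNorm eE x < δ → ordNorm eF (T x) < ε)
    (A : Set E) (hA : ∃ R : ℝ, ∀ x ∈ A, ordNorm eE x ≤ R) :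
    ∃ M : ℝ, ∀ T ∈ H, ∀ x ∈ A, ordNorm eF (T x) ≤ M := by
  obtain ⟨δ, hδ, hδT⟩ := hequi 1 one_pos
  obtain ⟨R, hR⟩ := hA
  set R' := max R 0 + 1
  have hR' : 0 < R' := by positivity
  have hhalf : ordNorm eE ((δ / 2) • eE) < δ := by
    linarith [ordNorm_smul_self_le huE.nonneg (half_pos hδ)]
  refine ⟨R' * (δ / 2)⁻¹, fun T hT x hx => ?_⟩
  obtain ⟨hadd, hmono⟩ := hH T hT
  have hTe := hadd.map_self_le_inv_smul huF (half_pos hδ) (hδT T hT _ hhalf)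
  obtain ⟨hx₁, hx₂⟩ := huE.neg_smul_le_and_le_smul_of_ordNorm_lt
    (show ordNorm eE x < R' by linarith [hR x hx, le_max_left R 0])
  obtain ⟨hTx₁, hTx₂⟩ := hadd.neg_smul_le_map_and_map_le_smul hmono hx₁ hx₂
  have hbound : R' • T eE ≤ (R' * (δ / 2)⁻¹) • eF := by
    rw [mul_smul]
    exact smul_le_smul_of_nonneg_left hTe hR'.le
  exact ordNorm_le_of_neg_smul_le_of_le_smul (by positivity)
    ((neg_le_neg hbound).trans hTx₁) (hTx₂.trans hbound)

theorem stmt12 {E F : Type*}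
    [AddCommGroup E] [PartialOrder E] [IsOrderedAddMonoid E] [Module ℝ E]
    [PosSMulStrictMono ℝ E] [PosSMulReflectLT ℝ E]
    [AddCommGroup F] [PartialOrder F] [IsOrderedAddMonoid F] [Module ℝ F]
    [PosSMulStrictMono ℝ F] [PosSMulReflectLT ℝ F]
    (eE : E) (eF : F) (huE : IsOrderUnit eE) (haE : IsArch eE)
    (huF : IsOrderUnit eF) (haF : IsArch eF)
    (H : Set (E → F)) (hH : ∀ T ∈ H, WAddOp eE T ∧ Monotone T)
    (hequi : ∀ ε : ℝ, 0 < ε → ∃ δ : ℝ, 0 < δ ∧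
      ∀ T ∈ H, ∀ x : E, ordNorm eE x < δ → ordNorm eF (T x) < ε)
    (A : Set E) (hA : ∃ R : ℝ, ∀ x ∈ A, ordNorm eE x ≤ R) :
    ∃ M : ℝ, ∀ T ∈ H, ∀ x ∈ A, ordNorm eF (T x) ≤ M :=
  stmt12_general eE eF huE huF H hH hequi A hA
end
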